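/- arXiv:math/0607746 — 5 statements merged into one kernel-verified Lean document; each statement's English description precedes it below -/
import Mathlib

section
/- The Sylvester equation A·X + X·B = C has a unique solution X if and only if A and -B have no common eigenvalue, i.e., the spectra of A and -B are disjoint. -/
open Matrix Polynomial

lemma eval_charpoly' {k : ℕ} (M : Matrix (Fin k) (Fin k) ℂ) (μ : ℂ) :
    M.charpoly.eval μ = (μ • (1 : Matrix (Fin k) (Fin k) ℂ) - M).det := by
  rw [Matrix.charpoly, ← Polynomial.coe_evalRingHom, RingHom.map_det]
  congr 1
  ext i j
  by_cases h : i = j <;>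
    simp [charmatrix_apply, Matrix.one_apply, h, Matrix.smul_apply, Matrix.map_apply]

lemma aeval_comm {m n : ℕ} {A : Matrix (Fin m) (Fin m) ℂ} {N : Matrix (Fin n) (Fin n) ℂ}
    {Y : Matrix (Fin m) (Fin n) ℂ} (h : A * Y = Y * N) (p : ℂ[X]) :
    (aeval A p) * Y = Y * (aeval N p) := by
  induction p using Polynomial.induction_on with
  | C a => simp [Algebra.algebraMap_eq_smul_one]
  | add p q hp hq => simp only [_root_.map_add, Matrix.add_mul, Matrix.mul_add, hp, hq]
  | monomial k a ih =>
    simp only [_root_.map_mul, _root_.map_pow, aeval_X, aeval_C, pow_succ] at ih ⊢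
    rw [← Matrix.mul_assoc _ (A ^ k) A, Matrix.mul_assoc _ A Y, h, ← Matrix.mul_assoc, ih,
      Matrix.mul_assoc, Matrix.mul_assoc]

lemma isUnit_aeval {m n : ℕ} (A : Matrix (Fin m) (Fin m) ℂ) (N : Matrix (Fin n) (Fin n) ℂ)
    (hdisj : ∀ μ : ℂ, A.charpoly.IsRoot μ → ¬ N.charpoly.IsRoot μ) :
    IsUnit (aeval N A.charpoly) := by
  rw [Matrix.isUnit_iff_isUnit_det, isUnit_iff_ne_zero]
  have hsp : A.charpoly = (A.charpoly.roots.toList.map fun a => X - C a).prod := by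
    conv_lhs => rw [← (prod_multiset_X_sub_C_of_monic_of_roots_card_eq A.charpoly_monic
      (splits_iff_card_roots.mp (IsAlgClosed.splits A.charpoly)))]
    rw [← Multiset.coe_toList A.charpoly.roots, Multiset.map_coe, Multiset.prod_coe,
      Multiset.coe_toList]
  rw [hsp, map_list_prod, ← Matrix.coe_detMonoidHom, map_list_prod]
  apply List.prod_ne_zero
  simp only [List.map_map, List.mem_map, Function.comp]
  rintro ⟨a, ha, hdet⟩
  rw [Multiset.mem_toList] at ha
  have haroot : A.charpoly.IsRoot a := isRoot_of_mem_roots ha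
  apply hdisj a haroot
  have hthis : (aeval N (X - C a)).det = 0 := hdet
  simp only [map_sub, aeval_X, aeval_C, Algebra.algebraMap_eq_smul_one] at hthis
  rw [Polynomial.IsRoot, eval_charpoly']
  have hneg : a • (1 : Matrix (Fin n) (Fin n) ℂ) - N = -(N - a • 1) := by abel
  rw [hneg, Matrix.det_neg, hthis, mul_zero]

/-- The Sylvester equation `A·X + X·B = C` has a unique solution for every `C`
iff the spectra (roots of the characteristic polynomials) of `A` and `-B` are disjoint. -/
theorem sylvester_unique_iff_disjoint_spectra {m n : ℕ}
    (A : Matrix (Fin m) (Fin m) ℂ) (B : Matrix (Fin n) (Fin n) ℂ) :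
    (∀ C : Matrix (Fin m) (Fin n) ℂ, ∃! X : Matrix (Fin m) (Fin n) ℂ,
        A * X + X * B = C) ↔
    ∀ μ : ℂ, ¬ (A.charpoly.IsRoot μ ∧ (-B).charpoly.IsRoot μ) := by
  constructor
  · rintro h μ ⟨hA, hB⟩
    have hdetA : (A - μ • 1).det = 0 := by
      have h1 : (μ • (1 : Matrix (Fin m) (Fin m) ℂ) - A).det = 0 := by
        rw [← eval_charpoly']; exact hA
      have h2 : A - μ • 1 = -(μ • (1 : Matrix (Fin m) (Fin m) ℂ) - A) := by abel
      rw [h2, Matrix.det_neg, h1, mul_zero]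
    obtain ⟨v, hv0, hv⟩ := Matrix.exists_mulVec_eq_zero_iff.mpr hdetA
    have hdetB : ((-B)ᵀ - μ • 1).det = 0 := by
      have h1 : (μ • (1 : Matrix (Fin n) (Fin n) ℂ) - (-B)).det = 0 := by
        rw [← eval_charpoly']; exact hB
      have h2 : ((-B)ᵀ - μ • 1) = (-(μ • (1 : Matrix (Fin n) (Fin n) ℂ) - (-B)))ᵀ := by
        ext i j
        simp only [Matrix.sub_apply, Matrix.transpose_apply, Matrix.neg_apply,
          Matrix.smul_apply, Matrix.one_apply, smul_eq_mul]
        by_cases hij : i = j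
        · simp [hij]; ring
        · simp [hij, eq_comm]
      rw [h2, Matrix.det_transpose, Matrix.det_neg, h1, mul_zero]
    obtain ⟨w, hw0, hw⟩ := Matrix.exists_mulVec_eq_zero_iff.mpr hdetB
    have hv' : A.mulVec v = μ • v := by
      have := hv
      rw [Matrix.sub_mulVec, sub_eq_zero, Matrix.smul_mulVec, Matrix.one_mulVec] at this
      exact this
    have hw' : Bᵀ.mulVec w = -(μ • w) := by
      have := hw
      rw [Matrix.sub_mulVec, sub_eq_zero, Matrix.smul_mulVec, Matrix.one_mulVec,
        Matrix.transpose_neg, Matrix.neg_mulVec] at this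
      rw [← this, neg_neg]
    set X : Matrix (Fin m) (Fin n) ℂ := vecMulVec v w with hXdef
    have hAX : A * X = μ • X := by
      ext i j
      have hvi := congrFun hv' i
      simp only [Matrix.mulVec, dotProduct, Pi.smul_apply, smul_eq_mul] at hvi
      simp only [hXdef, Matrix.mul_apply, Matrix.vecMulVec_apply, Matrix.smul_apply,
        smul_eq_mul]
      calc ∑ k, A i k * (v k * w j) = (∑ k, A i k * v k) * w j := by
            rw [Finset.sum_mul]; congr 1; ext k; ring
        _ = μ * (v i * w j) := by rw [hvi]; ring
    have hXB : X * B = (-μ) • X := by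
      ext i j
      have hwj := congrFun hw' j
      simp only [Matrix.mulVec, dotProduct, Matrix.transpose_apply, Pi.neg_apply,
        Pi.smul_apply, smul_eq_mul] at hwj
      simp only [hXdef, Matrix.mul_apply, Matrix.vecMulVec_apply, Matrix.smul_apply,
        smul_eq_mul]
      calc ∑ k, v i * w k * B k j = v i * ∑ k, B k j * w k := by
            rw [Finset.mul_sum]; congr 1; ext k; ring
        _ = -μ * (v i * w j) := by rw [hwj]; ring
    have hX0 : A * X + X * B = 0 := by
      rw [hAX, hXB, ← add_smul]
      simp
    have hXne : X ≠ 0 := by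
      obtain ⟨i, hi⟩ := Function.ne_iff.mp hv0
      obtain ⟨j, hj⟩ := Function.ne_iff.mp hw0
      intro heq
      have := congrFun (congrFun heq i) j
      simp only [hXdef, Matrix.vecMulVec_apply, Matrix.zero_apply] at this
      exact mul_ne_zero hi hj this
    obtain ⟨Y, hY, huniq⟩ := h 0
    exact hXne ((huniq X hX0).trans (huniq 0 (by simp)).symm)
  · intro hdisj
    let T : Matrix (Fin m) (Fin n) ℂ →ₗ[ℂ] Matrix (Fin m) (Fin n) ℂ :=
      { toFun := fun X => A * X + X * B
        map_add' := fun X Y => by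
          simp only [Matrix.mul_add, Matrix.add_mul]; abel
        map_smul' := fun c X => by
          simp only [Matrix.mul_smul, Matrix.smul_mul, RingHom.id_apply, smul_add] }
    have hinj : Function.Injective T := by
      rw [← LinearMap.ker_eq_bot, LinearMap.ker_eq_bot']
      intro X hX
      have hX' : A * X + X * B = 0 := hX
      have hcomm : A * X = X * (-B) := by
        rw [Matrix.mul_neg, ← sub_eq_zero, sub_neg_eq_add, hX']
      have h1 := aeval_comm hcomm A.charpoly
      rw [Matrix.aeval_self_charpoly, Matrix.zero_mul] at h1
      obtain ⟨u, hu⟩ := isUnit_aeval A (-B) (fun μ hμA hμB => hdisj μ ⟨hμA, hμB⟩)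
      have hXu : X * (u : Matrix (Fin n) (Fin n) ℂ) = 0 := by rw [hu, ← h1]
      calc X = X * ((u : Matrix (Fin n) (Fin n) ℂ) * (↑u⁻¹ : Matrix (Fin n) (Fin n) ℂ)) := by
            rw [Units.mul_inv, Matrix.mul_one]
        _ = X * (u : Matrix (Fin n) (Fin n) ℂ) * (↑u⁻¹ : Matrix (Fin n) (Fin n) ℂ) := by
            rw [Matrix.mul_assoc]
        _ = 0 := by rw [hXu, Matrix.zero_mul]
    have hsurj : Function.Surjective T := (LinearMap.injective_iff_surjective).mp hinj
    intro C
    obtain ⟨X, hX⟩ := hsurj C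
    exact ⟨X, hX, fun Y hY => hinj (show T Y = T X from hY.trans hX.symm)⟩
end

section
/- The map X ↦ A·X + X·B on m×n complex matrices is a bijective linear map if and only if for all eigenvalues λ of A and μ of B we have λ + μ ≠ 0. -/
/-!
If `A v = λ v` and `wᵀ B = μ wᵀ` with `v, w ≠ 0`, then `X ↦ A X + X B` sends `v wᵀ ≠ 0` to
`(λ + μ) v wᵀ`, so it is not injective when `λ + μ = 0`. Conversely, `A X + X B = 0` means
`A X = X (-B)`, hence `χ_A(A) X = X χ_A(-B)`. The left side vanishes by Cayley–Hamilton, and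
`χ_A(-B)` is invertible by the spectral mapping theorem, since no eigenvalue of `-B` is a root of
`χ_A`; so `X = 0`. In finite dimension injectivity gives bijectivity.
-/

open Polynomial Matrix

theorem Polynomial.isUnit_aeval_of_forall_mem_spectrum_not_isRoot {K A : Type*} [Field K]
    [IsAlgClosed K] [Ring A] [Algebra K A] {p : K[X]} (hp : p.Monic) {a : A}
    (h : ∀ k ∈ spectrum K a, ¬p.IsRoot k) : IsUnit (aeval a p) := by
  by_contra hu
  rw [(IsAlgClosed.splits p).eq_prod_roots_of_monic hp] at hu
  obtain ⟨k, hk, hroot⟩ := spectrum.exists_mem_of_not_isUnit_aeval_prod hu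
  exact h k hk hroot

namespace Matrix

variable {m n K R : Type*} [Fintype m] [Fintype n]

section CommRing

variable [CommRing R]

theorem aeval_mul_eq_mul_aeval_of_mul_eq_mul [DecidableEq m] [DecidableEq n]
    {A : Matrix m m R} {C : Matrix n n R} {X : Matrix m n R} (hX : A * X = X * C) (p : R[X]) :
    aeval A p * X = X * aeval C p := by
  have hpow : ∀ k : ℕ, A ^ k * X = X * C ^ k := fun k => by
    induction k with
    | zero => simp
    | succ k ih => rw [pow_succ', pow_succ', Matrix.mul_assoc, ih, ← Matrix.mul_assoc, hX,
        Matrix.mul_assoc]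
  induction p using Polynomial.induction_on' with
  | add p q hp hq => rw [map_add, map_add, Matrix.add_mul, Matrix.mul_add, hp, hq]
  | monomial k a => simp only [aeval_monomial, Algebra.algebraMap_eq_smul_one, Matrix.smul_mul,
      Matrix.mul_smul, one_mul, hpow]

def sylvesterMap (A : Matrix m m R) (B : Matrix n n R) : Matrix m n R →ₗ[R] Matrix m n R :=
  mulLeftLinearMap n R A + mulRightLinearMap m R B

@[simp]
theorem sylvesterMap_apply (A : Matrix m m R) (B : Matrix n n R) (X : Matrix m n R) :
    sylvesterMap A B X = A * X + X * B :=
  rfl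

theorem sylvesterMap_vecMulVec {A : Matrix m m R} {B : Matrix n n R} {v : m → R} {w : n → R}
    {lam μ : R} (hv : A *ᵥ v = lam • v) (hw : w ᵥ* B = μ • w) :
    sylvesterMap A B (vecMulVec v w) = (lam + μ) • vecMulVec v w := by
  rw [sylvesterMap_apply, mul_vecMulVec, vecMulVec_mul, hv, hw, smul_vecMulVec, vecMulVec_smul,
    add_smul]

end CommRing

section Field

variable [Field K] [DecidableEq m]

theorem exists_mulVec_eq_smul_of_isRoot_charpoly {M : Matrix m m K} {lam : K}
    (h : M.charpoly.IsRoot lam) : ∃ v ≠ 0, M *ᵥ v = lam • v := by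
  rw [IsRoot, eval_charpoly, ← exists_mulVec_eq_zero_iff] at h
  obtain ⟨v, hv, hMv⟩ := h
  refine ⟨v, hv, ?_⟩
  rw [sub_mulVec, scalar_apply, ← smul_one_eq_diagonal, smul_mulVec, one_mulVec,
    sub_eq_zero] at hMv
  exact hMv.symm

theorem exists_vecMul_eq_smul_of_isRoot_charpoly {M : Matrix m m K} {μ : K}
    (h : M.charpoly.IsRoot μ) : ∃ w ≠ 0, w ᵥ* M = μ • w := by
  rw [← charpoly_transpose] at h
  simpa only [mulVec_transpose] using exists_mulVec_eq_smul_of_isRoot_charpoly h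

theorem not_injective_sylvesterMap [DecidableEq n] {A : Matrix m m K} {B : Matrix n n K}
    {lam μ : K} (hlam : A.charpoly.IsRoot lam) (hμ : B.charpoly.IsRoot μ) (hsum : lam + μ = 0) :
    ¬Function.Injective (sylvesterMap A B) := by
  obtain ⟨v, hv, hAv⟩ := exists_mulVec_eq_smul_of_isRoot_charpoly hlam
  obtain ⟨w, hw, hwB⟩ := exists_vecMul_eq_smul_of_isRoot_charpoly hμ
  obtain ⟨i, hvi⟩ := Function.ne_iff.mp hv
  obtain ⟨j, hwj⟩ := Function.ne_iff.mp hw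
  rw [injective_iff_map_eq_zero]
  intro hinj
  have hX : vecMulVec v w = 0 := hinj _ <| by
    rw [sylvesterMap_vecMulVec hAv hwB, hsum, zero_smul]
  exact mul_ne_zero hvi hwj congr($hX i j)

theorem sylvesterMap_injective [IsAlgClosed K] [DecidableEq n] {A : Matrix m m K}
    {B : Matrix n n K} (h : ∀ lam μ, A.charpoly.IsRoot lam → B.charpoly.IsRoot μ → lam + μ ≠ 0) :
    Function.Injective (sylvesterMap A B) := by
  rw [← LinearMap.ker_eq_bot, LinearMap.ker_eq_bot']
  intro X hX
  have hAX : A * X = X * -B := by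
    rw [Matrix.mul_neg, eq_neg_iff_add_eq_zero]
    exact hX
  have hunit : IsUnit (aeval (-B) A.charpoly) := by
    refine isUnit_aeval_of_forall_mem_spectrum_not_isRoot A.charpoly_monic fun k hk hroot => ?_
    rw [← spectrum.neg_eq, Set.mem_neg, mem_spectrum_iff_isRoot_charpoly] at hk
    exact h k (-k) hroot hk (add_neg_cancel k)
  have hX0 : X * aeval (-B) A.charpoly = 0 := by
    rw [← aeval_mul_eq_mul_aeval_of_mul_eq_mul hAX, aeval_self_charpoly, Matrix.zero_mul]
  obtain ⟨u, hu⟩ := hunit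
  rw [← hu] at hX0
  simpa [Matrix.mul_assoc] using congrArg (· * (↑u⁻¹ : Matrix n n K)) hX0

end Field

end Matrix

/-- The linear map `X ↦ A·X + X·B` on `m×n` complex matrices is bijective iff
for all eigenvalues `λ` of `A` and `μ` of `B` we have `λ + μ ≠ 0`. -/
theorem sylvester_bijective_iff {m n : ℕ}
    (A : Matrix (Fin m) (Fin m) ℂ) (B : Matrix (Fin n) (Fin n) ℂ) :
    Function.Bijective (fun X : Matrix (Fin m) (Fin n) ℂ => A * X + X * B) ↔
    ∀ lam μ : ℂ, A.charpoly.IsRoot lam → B.charpoly.IsRoot μ → lam + μ ≠ 0 := by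
  change Function.Bijective (sylvesterMap A B) ↔ _
  rw [Function.Bijective, ← LinearMap.injective_iff_surjective, and_self]
  exact ⟨fun hinj lam μ hlam hμ hsum => not_injective_sylvesterMap hlam hμ hsum hinj,
    sylvesterMap_injective⟩
end

section
/- Let M₂ be the n×n matrix with α on the subdiagonal, γ on the superdiagonal, and zeros elsewhere, where α·γ ≠ 0. Then the eigenvalues of M₂ are 2·√(αγ)·cos(kπ/(n+1)) for k = 1,…,n (working over ℂ with a fixed square root of αγ). -/
/-! For `θ = k π / (n + 1)` with `1 ≤ k ≤ n` and `r = α / s`, the vector `v j = r ^ j sin (j θ)`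
is an eigenvector for `2 s cos θ`: the factor `r ^ j` turns the eigenvalue equation
`α v (j - 1) + γ v (j + 1) = μ v j` into `sin ((j - 1) θ) + sin ((j + 1) θ) = 2 sin (j θ) cos θ`,
and `sin ((n + 1) θ) = 0` is the boundary condition at the last row. Since `cos` is injective
on `[0, π]` these are `n` distinct roots of the characteristic polynomial, which has degree `n`. -/

open Polynomial Matrix Finset Real

theorem Polynomial.setOf_isRoot_eq_of_natDegree_le_card {R : Type*} [CommRing R] [IsDomain R]
    {p : R[X]} (hp : p ≠ 0) {S : Finset R} (hS : p.natDegree ≤ #S)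
    (hroot : ∀ x ∈ S, p.IsRoot x) : {x | p.IsRoot x} = S := by
  classical
  have hsub : S ⊆ p.roots.toFinset := fun x hx => by simpa [hp] using hroot x hx
  have hcard : #p.roots.toFinset ≤ #S :=
    (Multiset.toFinset_card_le _).trans ((card_roots' p).trans hS)
  rw [Finset.eq_of_subset_of_card_le hsub hcard]
  ext x
  simp [hp]

theorem Matrix.isRoot_charpoly_of_mulVec_eq_smul {ι R : Type*} [Fintype ι] [DecidableEq ι]
    [CommRing R] [IsDomain R] {M : Matrix ι ι R} {v : ι → R} {μ : R} (hv : v ≠ 0)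
    (h : M *ᵥ v = μ • v) : M.charpoly.IsRoot μ := by
  rw [IsRoot, eval_charpoly, ← exists_mulVec_eq_zero_iff]
  exact ⟨v, hv, by simp [sub_mulVec, h]⟩

section Tridiagonal

variable {R : Type*} [Semiring R] {n : ℕ} {α γ : R} {M : Matrix (Fin n) (Fin n) R}

theorem tridiagonal_mulVec_apply
    (hM : ∀ i j : Fin n, M i j =
      if (i : ℕ) = (j : ℕ) + 1 then α else if (j : ℕ) = (i : ℕ) + 1 then γ else 0)
    {w : ℕ → R} (hw₀ : w 0 = 0) (hwₙ : w (n + 1) = 0) (i : Fin n) :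
    (M *ᵥ fun j => w (j + 1)) i = α * w i + γ * w (i + 2) := by
  have hterm : ∀ j : Fin n, M i j * w (j + 1) =
      (if (j : ℕ) + 1 = i then α * w i else 0) +
        (if (j : ℕ) = i + 1 then γ * w (i + 2) else 0) := by
    intro j
    rw [hM]
    split_ifs <;> first | omega | simp_all
  rw [mulVec, dotProduct, Finset.sum_congr rfl fun j _ => hterm j, Finset.sum_add_distrib,
    Fin.sum_univ_eq_sum_range (fun j => if j + 1 = (i : ℕ) then α * w i else 0),
    Fin.sum_univ_eq_sum_range (fun j => if j = (i : ℕ) + 1 then γ * w (i + 2) else 0),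
    Finset.sum_ite_eq']
  have hlow : (∑ j ∈ range n, if j + 1 = (i : ℕ) then α * w i else 0) = α * w i := by
    obtain ⟨_ | m, hi⟩ := i
    · simp [hw₀]
    · simp [show m < n by omega]
  have hhigh : (if (i : ℕ) + 1 ∈ range n then γ * w (i + 2) else 0) = γ * w (i + 2) := by
    split_ifs with h
    · rfl
    · rw [show (i : ℕ) + 2 = n + 1 by simp at h; omega, hwₙ, mul_zero]
  rw [hlow, hhigh]

theorem tridiagonal_mulVec_eq_smul
    (hM : ∀ i j : Fin n, M i j =
      if (i : ℕ) = (j : ℕ) + 1 then α else if (j : ℕ) = (i : ℕ) + 1 then γ else 0)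
    {w : ℕ → R} (hw₀ : w 0 = 0) (hwₙ : w (n + 1) = 0) {μ : R}
    (hrec : ∀ j, α * w j + γ * w (j + 2) = μ * w (j + 1)) :
    (M *ᵥ fun j => w (j + 1)) = μ • fun j : Fin n => w (j + 1) := by
  ext i
  simp [tridiagonal_mulVec_apply hM hw₀ hwₙ, hrec]

end Tridiagonal

theorem Complex.geom_mul_sin_recurrence {α γ s r θ : ℂ} (hα : s * r = α) (hγ : γ * r = s)
    (j : ℕ) :
    α * (r ^ j * sin (j * θ)) + γ * (r ^ (j + 2) * sin ((j + 2 : ℕ) * θ)) =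
      2 * s * cos θ * (r ^ (j + 1) * sin ((j + 1 : ℕ) * θ)) := by
  have hsin : sin (j * θ) + sin ((j + 2 : ℕ) * θ) = 2 * sin ((j + 1 : ℕ) * θ) * cos θ := by
    have h₁ := sin_sub ((j + 1 : ℕ) * θ) θ
    have h₂ := sin_add ((j + 1 : ℕ) * θ) θ
    push_cast at h₁ h₂ ⊢
    rw [show ((j : ℂ) + 1) * θ - θ = j * θ by ring] at h₁
    rw [show ((j : ℂ) + 1) * θ + θ = (j + 2) * θ by ring] at h₂
    linear_combination h₁ + h₂
  linear_combination s * r ^ (j + 1) * hsin - r ^ j * sin (j * θ) * hα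
    + r ^ (j + 1) * sin ((j + 2 : ℕ) * θ) * hγ

theorem Complex.natCast_mul_pi_div (k n : ℕ) :
    (k : ℂ) * π / ((n : ℂ) + 1) = ((k * π / (n + 1) : ℝ) : ℂ) := by
  push_cast
  rfl

theorem nat_mul_pi_div_mem_Ioo {k n : ℕ} (hk : k ∈ Icc 1 n) :
    (k : ℝ) * π / (n + 1) ∈ Set.Ioo 0 π := by
  rw [Finset.mem_Icc] at hk
  have hk₁ : (1 : ℝ) ≤ k := by exact_mod_cast hk.1
  have hkn : (k : ℝ) < n + 1 := by exact_mod_cast Nat.lt_succ_of_le hk.2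
  exact ⟨by positivity, by rw [div_lt_iff₀ (by positivity)]; nlinarith [pi_pos]⟩

theorem injOn_cos_nat_mul_pi_div (n : ℕ) :
    Set.InjOn (fun k : ℕ => Complex.cos (k * π / (n + 1))) (Icc 1 n) := by
  intro a ha b hb hab
  simp only [Complex.natCast_mul_pi_div, ← Complex.ofReal_cos, Complex.ofReal_inj] at hab
  have := injOn_cos (Set.Ioo_subset_Icc_self (nat_mul_pi_div_mem_Ioo ha))
    (Set.Ioo_subset_Icc_self (nat_mul_pi_div_mem_Ioo hb)) hab
  field_simp at this
  exact_mod_cast this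

theorem isRoot_charpoly_tridiagonal {n : ℕ} {α γ s : ℂ} (hαγ : α * γ ≠ 0) (hs : s ^ 2 = α * γ)
    {M : Matrix (Fin n) (Fin n) ℂ}
    (hM : ∀ i j : Fin n, M i j =
      if (i : ℕ) = (j : ℕ) + 1 then α else if (j : ℕ) = (i : ℕ) + 1 then γ else 0)
    {k : ℕ} (hk : k ∈ Icc 1 n) :
    M.charpoly.IsRoot (2 * s * Complex.cos ((k : ℂ) * π / ((n : ℂ) + 1))) := by
  have hs₀ : s ≠ 0 := by rintro rfl; simp_all
  obtain ⟨r, hrα, hrγ⟩ : ∃ r, s * r = α ∧ γ * r = s :=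
    ⟨α / s, by field_simp, by field_simp; linear_combination -hs⟩
  rw [Complex.natCast_mul_pi_div]
  set θ : ℝ := k * π / (n + 1)
  set w : ℕ → ℂ := fun j => r ^ j * Complex.sin (j * θ)
  have hwₙ : w (n + 1) = 0 := by
    have : ((n + 1 : ℕ) : ℂ) * θ = k * π := by simp only [θ]; push_cast; field_simp
    simp only [w]
    rw [this, Complex.sin_nat_mul_pi, mul_zero]
  have hv : (fun j : Fin n => w (j + 1)) ≠ 0 := by
    have hr : r ≠ 0 := right_ne_zero_of_mul (hrα ▸ left_ne_zero_of_mul hαγ)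
    have hsin : Complex.sin θ ≠ 0 := by
      rw [← Complex.ofReal_sin, Complex.ofReal_ne_zero]
      exact (sin_pos_of_mem_Ioo (nat_mul_pi_div_mem_Ioo hk)).ne'
    intro h
    have := congrFun h ⟨0, by simp at hk; omega⟩
    simp_all [w]
  exact isRoot_charpoly_of_mulVec_eq_smul hv (tridiagonal_mulVec_eq_smul hM (by simp [w]) hwₙ
    (Complex.geom_mul_sin_recurrence hrα hrγ))

/-- The eigenvalues of the `n×n` matrix with `α` on the subdiagonal and `γ` on the
superdiagonal (and zeros elsewhere), with `α·γ ≠ 0`, are `2·√(αγ)·cos(kπ/(n+1))`,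
`k = 1,…,n`, where `s` is a fixed complex square root of `αγ`. -/
theorem eigenvalues_bidiagonal {n : ℕ} (α γ s : ℂ) (hαγ : α * γ ≠ 0) (hs : s ^ 2 = α * γ)
    (M₂ : Matrix (Fin n) (Fin n) ℂ)
    (hM : ∀ i j : Fin n, M₂ i j =
      if (i : ℕ) = (j : ℕ) + 1 then α else if (j : ℕ) = (i : ℕ) + 1 then γ else 0) :
    {μ : ℂ | M₂.charpoly.IsRoot μ} =
      {μ : ℂ | ∃ k ∈ Finset.Icc 1 n,
        μ = 2 * s * Complex.cos ((k : ℂ) * Real.pi / ((n : ℂ) + 1))} := by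
  have hs₀ : s ≠ 0 := by rintro rfl; simp_all
  set f : ℕ → ℂ := fun k => 2 * s * Complex.cos ((k : ℂ) * π / ((n : ℂ) + 1))
  have hf : Set.InjOn f (Icc 1 n) :=
    (mul_right_injective₀ (mul_ne_zero two_ne_zero hs₀)).comp_injOn (injOn_cos_nat_mul_pi_div n)
  have hcard : M₂.charpoly.natDegree ≤ #((Icc 1 n).image f) := by
    rw [charpoly_natDegree_eq_dim, card_image_of_injOn hf]
    simp
  rw [setOf_isRoot_eq_of_natDegree_le_card M₂.charpoly_monic.ne_zero hcard
    (Finset.forall_mem_image.2 fun k hk => isRoot_charpoly_tridiagonal hαγ hs hM hk)]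
  ext μ
  simp [f, eq_comm]
end

section
/- If M₂ is nilpotent with M₂^k = 0 and M₁ is invertible, then the unique solution of M₁·E + E·M₂ = F is given by the finite sum E = Σ_{j=0}^{k−1} (−1)^j · M₁^{−(j+1)} · F · M₂^j. -/
/-!
Existence: multiplying the `j`-th term `(-1)^j A⁻¹^(j+1) F B^j` by `A` on the left gives
`(-1)^j A⁻¹^j F B^j`, and by `B` on the right gives minus the next such term, so the sum telescopes
to `F - (-1)^k A⁻¹^k F B^k = F`.
Uniqueness: if `A E + E B = 0` then `E B^j = (-A)^j E` for all `j`, so `(-A)^k E = E B^k = 0` and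
`E = 0` because `-A` is invertible.
-/

open Finset

namespace Matrix

variable {R : Type*} [CommRing R] {m n : Type*} [Fintype m] [Fintype n]

theorem mul_pow_eq_pow_mul_of_mul_eq [DecidableEq m] [DecidableEq n]
    {A : Matrix m m R} {B : Matrix n n R} {E : Matrix m n R} (h : E * B = A * E) (j : ℕ) :
    E * B ^ j = A ^ j * E := by
  induction j with
  | zero => simp
  | succ j ih => rw [pow_succ, ← Matrix.mul_assoc, ih, Matrix.mul_assoc, h, ← Matrix.mul_assoc,
      ← pow_succ]

theorem sylvester_partial_sum [DecidableEq m] [DecidableEq n]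
    {A : Matrix m m R} (hA : IsUnit A) (B : Matrix n n R) (F : Matrix m n R) (k : ℕ) :
    A * (∑ j ∈ range k, (-1 : R) ^ j • (A⁻¹ ^ (j + 1) * F * B ^ j)) +
      (∑ j ∈ range k, (-1 : R) ^ j • (A⁻¹ ^ (j + 1) * F * B ^ j)) * B =
      F - (-1 : R) ^ k • (A⁻¹ ^ k * F * B ^ k) := by
  have hAA : A * A⁻¹ = 1 := A.mul_nonsing_inv ((isUnit_iff_isUnit_det A).mp hA)
  induction k with
  | zero => simp
  | succ k ih =>
    have left : A * (A⁻¹ ^ (k + 1) * F * B ^ k) = A⁻¹ ^ k * F * B ^ k := by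
      rw [pow_succ', ← Matrix.mul_assoc, ← Matrix.mul_assoc, ← Matrix.mul_assoc, hAA,
        Matrix.one_mul]
    rw [sum_range_succ, Matrix.mul_add, Matrix.add_mul, add_add_add_comm, ih, Matrix.mul_smul,
      left, Matrix.smul_mul, Matrix.mul_assoc _ (B ^ k), ← pow_succ, pow_succ (-1 : R)]
    simp only [mul_neg_one, neg_smul]
    abel

theorem eq_zero_of_mul_add_mul_eq_zero [DecidableEq m] [DecidableEq n]
    {A : Matrix m m R} (hA : IsUnit A) {B : Matrix n n R} {k : ℕ} (hB : B ^ k = 0)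
    {E : Matrix m n R} (h : A * E + E * B = 0) : E = 0 := by
  have hEB : E * B = -A * E := by rw [Matrix.neg_mul, eq_neg_iff_add_eq_zero, add_comm, h]
  have hAk : (-A) ^ k * E = 0 := by rw [← mul_pow_eq_pow_mul_of_mul_eq hEB, hB, Matrix.mul_zero]
  have hdet : IsUnit ((-A) ^ k).det := ((-A) ^ k).isUnit_iff_isUnit_det.mp (hA.neg.pow k)
  rw [← ((-A) ^ k).nonsing_inv_mul_cancel_left E hdet, hAk, Matrix.mul_zero]

end Matrix

/-- If `M₂^k = 0` and `M₁` is invertible, the unique solution of `M₁·E + E·M₂ = F`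
is `E = Σ_{j=0}^{k−1} (−1)^j · M₁^{−(j+1)} · F · M₂^j`. -/
theorem sylvester_nilpotent_solution {K : Type*} [Field K] {m n k : ℕ}
    (M₁ : Matrix (Fin m) (Fin m) K) (hM₁ : IsUnit M₁)
    (M₂ : Matrix (Fin n) (Fin n) K) (hM₂ : M₂ ^ k = 0)
    (F : Matrix (Fin m) (Fin n) K) :
    (M₁ * (∑ j ∈ Finset.range k, (-1 : K) ^ j • (M₁⁻¹ ^ (j + 1) * F * M₂ ^ j)) +
      (∑ j ∈ Finset.range k, (-1 : K) ^ j • (M₁⁻¹ ^ (j + 1) * F * M₂ ^ j)) * M₂ = F) ∧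
    (∀ E : Matrix (Fin m) (Fin n) K, M₁ * E + E * M₂ = F →
      E = ∑ j ∈ Finset.range k, (-1 : K) ^ j • (M₁⁻¹ ^ (j + 1) * F * M₂ ^ j)) := by
  have hsol := Matrix.sylvester_partial_sum hM₁ M₂ F k
  rw [hM₂, Matrix.mul_zero, smul_zero, sub_zero] at hsol
  refine ⟨hsol, fun E hE => sub_eq_zero.mp (Matrix.eq_zero_of_mul_add_mul_eq_zero hM₁ hM₂ ?_)⟩
  rw [Matrix.mul_sub, Matrix.sub_mul, sub_add_sub_comm, hE, hsol, sub_self]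
end

section
/- If M₂ is nilpotent and M₁ is invertible, then the unique solution E of M₁·E + E·M₂ = F satisfies the bound ‖E‖ ≤ Σ_{j=0}^{k−1} ‖M₁⁻¹‖^{j+1}·‖M₂‖^j·‖F‖ in the Frobenius norm, where M₂^k = 0. -/
/-!
Put `A = M₁⁻¹` and `N = -M₂`. The equation gives `A F = E - A E N`, hence
`A^(j+1) F N^j = A^j E N^j - A^(j+1) E N^(j+1)`; summing over `j < k` telescopes to
`E - A^k E N^k = E`, since `N^k = 0`. The bound then follows from the triangle inequality
and submultiplicativity of the Frobenius norm.
-/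

/-- The Frobenius norm of a complex matrix. -/
noncomputable def frobNorm {m n : ℕ} (M : Matrix (Fin m) (Fin n) ℂ) : ℝ :=
  Real.sqrt (∑ i : Fin m, ∑ j : Fin n, ‖M i j‖ ^ 2)

open Finset

attribute [local instance] Matrix.frobeniusNormedAddCommGroup

namespace Matrix

section Sylvester

variable {l o R : Type*} [Fintype l] [Fintype o] [DecidableEq l] [DecidableEq o]

theorem sum_pow_mul_mul_pow_eq_sub [Ring R] {A : Matrix l l R} {N : Matrix o o R}
    {E F : Matrix l o R} (h : A * F = E - A * E * N) (k : ℕ) :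
    ∑ j ∈ range k, A ^ (j + 1) * F * N ^ j = E - A ^ k * E * N ^ k := by
  have telescope (j : ℕ) :
      A ^ (j + 1) * F * N ^ j = A ^ j * E * N ^ j - A ^ (j + 1) * E * N ^ (j + 1) := by
    rw [pow_succ A, pow_succ' N, Matrix.mul_assoc (A ^ j), h]
    simp only [Matrix.mul_sub, Matrix.sub_mul, Matrix.mul_assoc]
  simp_rw [telescope]
  simpa using sum_range_sub' (fun j ↦ A ^ j * E * N ^ j) k

theorem eq_sum_of_mul_add_mul_eq [CommRing R] {A : Matrix l l R} (hA : IsUnit A)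
    {B : Matrix o o R} {k : ℕ} (hB : B ^ k = 0) {E F : Matrix l o R}
    (h : A * E + E * B = F) :
    E = ∑ j ∈ range k, A⁻¹ ^ (j + 1) * F * (-B) ^ j := by
  have hinv : A⁻¹ * F = E - A⁻¹ * E * -B := by
    rw [← h, Matrix.mul_add, ← Matrix.mul_assoc,
      nonsing_inv_mul _ ((isUnit_iff_isUnit_det A).mp hA), Matrix.one_mul,
      Matrix.mul_assoc, Matrix.mul_neg, Matrix.mul_neg, sub_neg_eq_add]
  rw [sum_pow_mul_mul_pow_eq_sub hinv, neg_pow, hB, Matrix.mul_zero, Matrix.mul_zero, sub_zero]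

end Sylvester

section Frobenius

variable {l o 𝕜 : Type*} [Fintype l] [Fintype o] [RCLike 𝕜]

theorem frobenius_norm_pow_mul_le [DecidableEq l] (A : Matrix l l 𝕜) (F : Matrix l o 𝕜)
    (i : ℕ) : ‖A ^ i * F‖ ≤ ‖A‖ ^ i * ‖F‖ := by
  induction i with
  | zero => simp
  | succ i ih =>
    calc ‖A ^ (i + 1) * F‖ = ‖A * (A ^ i * F)‖ := by rw [pow_succ', Matrix.mul_assoc]
      _ ≤ ‖A‖ * ‖A ^ i * F‖ := frobenius_norm_mul _ _
      _ ≤ ‖A‖ * (‖A‖ ^ i * ‖F‖) := by gcongr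
      _ = ‖A‖ ^ (i + 1) * ‖F‖ := by ring

theorem frobenius_norm_mul_pow_le [DecidableEq o] (F : Matrix l o 𝕜) (B : Matrix o o 𝕜)
    (j : ℕ) : ‖F * B ^ j‖ ≤ ‖F‖ * ‖B‖ ^ j := by
  induction j with
  | zero => simp
  | succ j ih =>
    calc ‖F * B ^ (j + 1)‖ = ‖F * B ^ j * B‖ := by rw [pow_succ, Matrix.mul_assoc]
      _ ≤ ‖F * B ^ j‖ * ‖B‖ := frobenius_norm_mul _ _
      _ ≤ ‖F‖ * ‖B‖ ^ j * ‖B‖ := by gcongr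
      _ = ‖F‖ * ‖B‖ ^ (j + 1) := by ring

theorem frobenius_norm_pow_mul_mul_pow_le [DecidableEq l] [DecidableEq o] (A : Matrix l l 𝕜)
    (F : Matrix l o 𝕜) (B : Matrix o o 𝕜) (i j : ℕ) :
    ‖A ^ i * F * B ^ j‖ ≤ ‖A‖ ^ i * ‖F‖ * ‖B‖ ^ j :=
  (frobenius_norm_mul_pow_le _ B j).trans (by gcongr; exact frobenius_norm_pow_mul_le A F i)

end Frobenius

end Matrix

theorem frobNorm_eq_norm {m n : ℕ} (M : Matrix (Fin m) (Fin n) ℂ) : frobNorm M = ‖M‖ := by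
  rw [Matrix.frobenius_norm_def, frobNorm, Real.sqrt_eq_rpow]
  simp

/-- If `M₂^k = 0` and `M₁` is invertible, the solution of `M₁·E + E·M₂ = F` satisfies
`‖E‖ ≤ Σ_{j=0}^{k−1} ‖M₁⁻¹‖^{j+1}·‖M₂‖^j·‖F‖` in the Frobenius norm. -/
theorem sylvester_nilpotent_bound {m n k : ℕ}
    (M₁ : Matrix (Fin m) (Fin m) ℂ) (hM₁ : IsUnit M₁)
    (M₂ : Matrix (Fin n) (Fin n) ℂ) (hM₂ : M₂ ^ k = 0)
    (F E : Matrix (Fin m) (Fin n) ℂ) (hE : M₁ * E + E * M₂ = F) :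
    frobNorm E ≤ ∑ j ∈ Finset.range k,
      frobNorm M₁⁻¹ ^ (j + 1) * frobNorm M₂ ^ j * frobNorm F := by
  simp only [frobNorm_eq_norm]
  rw [Matrix.eq_sum_of_mul_add_mul_eq hM₁ hM₂ hE]
  refine (norm_sum_le _ _).trans (sum_le_sum fun j _ ↦ ?_)
  calc ‖M₁⁻¹ ^ (j + 1) * F * (-M₂) ^ j‖ ≤ ‖M₁⁻¹‖ ^ (j + 1) * ‖F‖ * ‖-M₂‖ ^ j :=
        Matrix.frobenius_norm_pow_mul_mul_pow_le _ _ _ _ _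
    _ = ‖M₁⁻¹‖ ^ (j + 1) * ‖M₂‖ ^ j * ‖F‖ := by rw [norm_neg]; ring
end
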